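/- Let φ_T(s,v) = T(s) × T*(s) + v·T(s), where T* = β_T × T and N* = β_N × N. Then the partial derivatives of φ_T satisfy ∂φ_T/∂v = T and ∂φ_T/∂s = −κ⟨β_T,N⟩·T − κ⟨β_N,T⟩·N + κ*·B + vκ·N (all functions evaluated at s). -/

import Mathlib

open Matrix

noncomputable section

/-- Cross product on ℝ³ (as `Fin 3 → ℝ`). -/
def cross3 (a b : Fin 3 → ℝ) : Fin 3 → ℝ := crossProduct a b

/-- Euclidean norm on ℝ³ (as `Fin 3 → ℝ`). -/
noncomputable def enorm3 (a : Fin 3 → ℝ) : ℝ := Real.sqrt (a ⬝ᵥ a)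

/-- A dual Frenet apparatus: smooth maps `T, N, B, T*, N*, B* : ℝ → ℝ³` and smooth
functions `κ, τ, κ*, τ* : ℝ → ℝ` such that `{T, N, B}` is orthonormal with `B = T × N`,
the real Frenet equations hold, and the dual-part Frenet equations hold. -/
structure DualFrenetApparatus where
  T : ℝ → Fin 3 → ℝ
  N : ℝ → Fin 3 → ℝ
  B : ℝ → Fin 3 → ℝ
  Tstar : ℝ → Fin 3 → ℝ
  Nstar : ℝ → Fin 3 → ℝ
  Bstar : ℝ → Fin 3 → ℝ
  kappa : ℝ → ℝ
  tau : ℝ → ℝ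
  kappaStar : ℝ → ℝ
  tauStar : ℝ → ℝ
  smooth_T : ContDiff ℝ (⊤ : ℕ∞) T
  smooth_N : ContDiff ℝ (⊤ : ℕ∞) N
  smooth_B : ContDiff ℝ (⊤ : ℕ∞) B
  smooth_Tstar : ContDiff ℝ (⊤ : ℕ∞) Tstar
  smooth_Nstar : ContDiff ℝ (⊤ : ℕ∞) Nstar
  smooth_Bstar : ContDiff ℝ (⊤ : ℕ∞) Bstar
  smooth_kappa : ContDiff ℝ (⊤ : ℕ∞) kappa
  smooth_tau : ContDiff ℝ (⊤ : ℕ∞) tau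
  smooth_kappaStar : ContDiff ℝ (⊤ : ℕ∞) kappaStar
  smooth_tauStar : ContDiff ℝ (⊤ : ℕ∞) tauStar
  unit_T : ∀ s, T s ⬝ᵥ T s = 1
  unit_N : ∀ s, N s ⬝ᵥ N s = 1
  unit_B : ∀ s, B s ⬝ᵥ B s = 1
  orth_TN : ∀ s, T s ⬝ᵥ N s = 0
  orth_TB : ∀ s, T s ⬝ᵥ B s = 0
  orth_NB : ∀ s, N s ⬝ᵥ B s = 0
  B_eq : ∀ s, B s = cross3 (T s) (N s)
  frenet_T : ∀ s, deriv T s = kappa s • N s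
  frenet_N : ∀ s, deriv N s = (-(kappa s)) • T s + tau s • B s
  frenet_B : ∀ s, deriv B s = (-(tau s)) • N s
  frenet_Tstar : ∀ s, deriv Tstar s = kappa s • Nstar s + kappaStar s • N s
  frenet_Nstar : ∀ s, deriv Nstar s =
    (-(kappa s)) • Tstar s + (-(kappaStar s)) • T s + tau s • Bstar s + tauStar s • B s
  frenet_Bstar : ∀ s, deriv Bstar s = (-(tau s)) • Nstar s + (-(tauStar s)) • N s

/-- Partial derivative of a parametrized surface with respect to the first parameter. -/
noncomputable def phiS (φ : ℝ → ℝ → Fin 3 → ℝ) (s v : ℝ) : Fin 3 → ℝ :=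
  deriv (fun t => φ t v) s

/-- Partial derivative with respect to the second parameter. -/
noncomputable def phiV (φ : ℝ → ℝ → Fin 3 → ℝ) (s v : ℝ) : Fin 3 → ℝ :=
  deriv (φ s) v

noncomputable def phiSS (φ : ℝ → ℝ → Fin 3 → ℝ) (s v : ℝ) : Fin 3 → ℝ :=
  deriv (fun t => phiS φ t v) s

noncomputable def phiSV (φ : ℝ → ℝ → Fin 3 → ℝ) (s v : ℝ) : Fin 3 → ℝ :=
  deriv (fun w => phiS φ s w) v

noncomputable def phiVV (φ : ℝ → ℝ → Fin 3 → ℝ) (s v : ℝ) : Fin 3 → ℝ :=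
  deriv (fun w => phiV φ s w) v

/-- `(s, v)` is a regular point of `φ` if `φ_s × φ_v ≠ 0` there. -/
def IsRegularPoint (φ : ℝ → ℝ → Fin 3 → ℝ) (s v : ℝ) : Prop :=
  cross3 (phiS φ s v) (phiV φ s v) ≠ 0

/-- The unit normal `n = (φ_v × φ_s) / ‖φ_v × φ_s‖`. -/
noncomputable def unitNormal (φ : ℝ → ℝ → Fin 3 → ℝ) (s v : ℝ) : Fin 3 → ℝ :=
  (enorm3 (cross3 (phiV φ s v) (phiS φ s v)))⁻¹ • cross3 (phiV φ s v) (phiS φ s v)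

/-- Gaussian curvature `K = (eg − f²)/(EG − F²)`. -/
noncomputable def GaussK (φ : ℝ → ℝ → Fin 3 → ℝ) (s v : ℝ) : ℝ :=
  (phiSS φ s v ⬝ᵥ unitNormal φ s v * (phiVV φ s v ⬝ᵥ unitNormal φ s v) -
      (phiSV φ s v ⬝ᵥ unitNormal φ s v) ^ 2) /
    (phiS φ s v ⬝ᵥ phiS φ s v * (phiV φ s v ⬝ᵥ phiV φ s v) -
      (phiS φ s v ⬝ᵥ phiV φ s v) ^ 2)

/-- Mean curvature (trace of the shape operator) `H = (eG − 2fF + gE)/(EG − F²)`. -/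
noncomputable def MeanH (φ : ℝ → ℝ → Fin 3 → ℝ) (s v : ℝ) : ℝ :=
  (phiSS φ s v ⬝ᵥ unitNormal φ s v * (phiV φ s v ⬝ᵥ phiV φ s v) -
      2 * (phiSV φ s v ⬝ᵥ unitNormal φ s v) * (phiS φ s v ⬝ᵥ phiV φ s v) +
      phiVV φ s v ⬝ᵥ unitNormal φ s v * (phiS φ s v ⬝ᵥ phiS φ s v)) /
    (phiS φ s v ⬝ᵥ phiS φ s v * (phiV φ s v ⬝ᵥ phiV φ s v) -
      (phiS φ s v ⬝ᵥ phiV φ s v) ^ 2)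

/-- The ruled surface `φ_X(s,v) = X(s) × X*(s) + v·X(s)`. -/
noncomputable def ruled (X Xstar : ℝ → Fin 3 → ℝ) : ℝ → ℝ → Fin 3 → ℝ :=
  fun s v => cross3 (X s) (Xstar s) + v • X s


lemma cross3_apply' (a b : Fin 3 → ℝ) : cross3 a b =
    ![a 1 * b 2 - a 2 * b 1, a 2 * b 0 - a 0 * b 2, a 0 * b 1 - a 1 * b 0] := rfl

lemma hasDerivAt_cross3 {f g : ℝ → Fin 3 → ℝ} {f' g' : Fin 3 → ℝ} {s : ℝ}
    (hf : HasDerivAt f f' s) (hg : HasDerivAt g g' s) :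
    HasDerivAt (fun t => cross3 (f t) (g t)) (cross3 f' (g s) + cross3 (f s) g') s := by
  rw [hasDerivAt_pi] at hf hg ⊢
  intro i
  simp only [cross3_apply']
  fin_cases i <;>
  · simp only [Pi.add_apply, Matrix.cons_val_zero, Matrix.cons_val_one, Matrix.head_cons,
      Fin.mk_one, Fin.reduceFinMk, Matrix.cons_val_two, Matrix.tail_cons, Fin.zero_eta,
      Fin.mk_zero]
    convert (((hf _).fun_mul (hg _)).fun_sub ((hf _).fun_mul (hg _))) using 1
    ring

lemma cross_cross3 (a b c : Fin 3 → ℝ) :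
    cross3 a (cross3 b c) = (a ⬝ᵥ c) • b - (a ⬝ᵥ b) • c := by
  funext i
  fin_cases i <;>
  · simp [cross3_apply', dotProduct, Fin.sum_univ_three]
    ring

lemma cross3_smul_left (c : ℝ) (a b : Fin 3 → ℝ) :
    cross3 (c • a) b = c • cross3 a b := by
  unfold cross3; rw [_root_.map_smul, LinearMap.smul_apply]

lemma cross3_add_right (a b c : Fin 3 → ℝ) :
    cross3 a (b + c) = cross3 a b + cross3 a c := map_add _ _ _

lemma cross3_smul_right (c : ℝ) (a b : Fin 3 → ℝ) :
    cross3 a (c • b) = c • cross3 a b := _root_.map_smul _ _ _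

/-- The partial derivatives of the ruled surface `φ_T(s,v) = T × T* + v T` satisfy
`∂φ_T/∂v = T` and `∂φ_T/∂s = −κ⟨β_T,N⟩ T − κ⟨β_N,T⟩ N + κ* B + vκ N`. -/
theorem partial_derivatives_tangent_indicatrix (F : DualFrenetApparatus)
    (βT βN : ℝ → Fin 3 → ℝ)
    (hβT : ContDiff ℝ (⊤ : ℕ∞) βT) (hβN : ContDiff ℝ (⊤ : ℕ∞) βN)
    (hTstar : ∀ s, F.Tstar s = cross3 (βT s) (F.T s))
    (hNstar : ∀ s, F.Nstar s = cross3 (βN s) (F.N s)) :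
    ∀ s v : ℝ,
      phiV (ruled F.T F.Tstar) s v = F.T s ∧
      phiS (ruled F.T F.Tstar) s v =
        (-(F.kappa s * (βT s ⬝ᵥ F.N s))) • F.T s +
          (-(F.kappa s * (βN s ⬝ᵥ F.T s))) • F.N s +
          F.kappaStar s • F.B s + (v * F.kappa s) • F.N s := by
  intro s v
  have hT : HasDerivAt F.T (F.kappa s • F.N s) s := by
    have h := ((F.smooth_T.differentiable (by simp)) s).hasDerivAt
    rwa [F.frenet_T s] at h
  have hTs : HasDerivAt F.Tstar (F.kappa s • F.Nstar s + F.kappaStar s • F.N s) s := by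
    have h := ((F.smooth_Tstar.differentiable (by simp)) s).hasDerivAt
    rwa [F.frenet_Tstar s] at h
  constructor
  · have h : HasDerivAt (fun w : ℝ => cross3 (F.T s) (F.Tstar s) + w • F.T s) (F.T s) v := by
      have h2 := ((hasDerivAt_id v).smul_const (F.T s)).const_add (cross3 (F.T s) (F.Tstar s))
      simpa using h2
    rw [phiV, show ruled F.T F.Tstar s = fun w : ℝ =>
      cross3 (F.T s) (F.Tstar s) + w • F.T s from rfl]
    exact h.deriv
  · have h : HasDerivAt (fun t => ruled F.T F.Tstar t v)
        (cross3 (F.kappa s • F.N s) (F.Tstar s) +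
          cross3 (F.T s) (F.kappa s • F.Nstar s + F.kappaStar s • F.N s) +
          v • (F.kappa s • F.N s)) s :=
      (hasDerivAt_cross3 hT hTs).add (hT.const_smul v)
    rw [phiS]
    rw [h.deriv]
    rw [hTstar s, hNstar s, F.B_eq s]
    rw [cross3_smul_left, cross3_add_right, cross3_smul_right, cross3_smul_right,
      cross_cross3, cross_cross3]
    have h1 : F.N s ⬝ᵥ F.T s = 0 := by rw [dotProduct_comm]; exact F.orth_TN s
    have h2 : F.T s ⬝ᵥ F.N s = 0 := F.orth_TN s
    have h3 : F.N s ⬝ᵥ βT s = βT s ⬝ᵥ F.N s := dotProduct_comm _ _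
    have h4 : F.T s ⬝ᵥ βN s = βN s ⬝ᵥ F.T s := dotProduct_comm _ _
    rw [h1, h2, h3, h4]
    module


end
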